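/- arXiv:2104.02369 — 3 statements merged into one kernel-verified Lean document; each statement's English description precedes it below -/
import Mathlib

section
/- There is no homeomorphism φ of R^2 such that the images under φ of the two sets A = {x : |x| ≤ r1} and B = {x : r2 ≤ |x| ≤ r3} (with 0 < r1 < r2 < r3) are linearly separable, i.e., such that there exist w ∈ R^2 and k ∈ R with w·φ(a) > k for all a ∈ A and w·φ(b) < k for all b ∈ B. -/
/-!
The preimage under `φ` of the open half-space `{y | k < ⟪w, y⟫}` is connected (a homeomorphic
image of a convex set), contains the centre of the disk, and is unbounded (`w ≠ 0`, as both sets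
are nonempty), because a homeomorphism of a proper space cannot map a bounded set onto an
unbounded one. By the intermediate value theorem for the norm it therefore meets the inner circle
`‖x‖ = r₂` of the annulus, which `φ` must send to the other side of the hyperplane.
-/

open scoped RealInnerProductSpace
open Bornology Set

theorem Homeomorph.isBounded_of_isBounded_preimage {X Y : Type*} [PseudoMetricSpace X]
    [ProperSpace X] [PseudoMetricSpace Y] (φ : X ≃ₜ Y) {s : Set Y}
    (hs : IsBounded (φ ⁻¹' s)) : IsBounded s :=
  (hs.isCompact_closure.image φ.continuous).isBounded.subset <|
    fun y hy => ⟨φ.symm y, subset_closure (by simpa using hy), φ.apply_symm_apply y⟩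

theorem not_isBounded_setOf_lt_inner {E : Type*} [NormedAddCommGroup E] [InnerProductSpace ℝ E]
    {w : E} (hw : w ≠ 0) (k : ℝ) : ¬ IsBounded {x : E | k < ⟪w, x⟫} := by
  intro h
  have inner_eq (c : ℝ) : ⟪w, (c / ‖w‖ ^ 2) • w⟫ = c := by
    have : ‖w‖ ^ 2 ≠ 0 := by positivity
    rw [real_inner_smul_right, real_inner_self_eq_norm_sq, div_mul_cancel₀ _ this]
  have hbdd : BddAbove (innerSL ℝ w '' {x : E | k < ⟪w, x⟫}) :=
    ((innerSL ℝ w).lipschitz.isBounded_image h).bddAbove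
  refine not_bddAbove_Ioi k (hbdd.mono fun c hc => ?_)
  exact ⟨(c / ‖w‖ ^ 2) • w, show k < _ from (inner_eq c).symm ▸ hc, inner_eq c⟩

theorem IsPreconnected.exists_norm_eq_of_not_isBounded {E : Type*} [SeminormedAddGroup E]
    {s : Set E} (hs : IsPreconnected s) (hunb : ¬ IsBounded s) {x : E} (hx : x ∈ s) {r : ℝ}
    (hxr : ‖x‖ ≤ r) : ∃ y ∈ s, ‖y‖ = r := by
  obtain ⟨z, hz, hzr⟩ : ∃ z ∈ s, r ≤ ‖z‖ := by
    by_contra! h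
    exact hunb (isBounded_iff_forall_norm_le.2 ⟨r, fun z hz => (h z hz).le⟩)
  exact hs.intermediate_value hx hz continuous_norm.continuousOn ⟨hxr, hzr⟩

/-- No self-homeomorphism of the plane can make a disk and a surrounding annulus
linearly separable. -/
theorem disk_annulus_not_linearly_separable (r₁ r₂ r₃ : ℝ)
    (h₁ : 0 < r₁) (h₂ : r₁ < r₂) (h₃ : r₂ < r₃) :
    ¬ ∃ (φ : EuclideanSpace ℝ (Fin 2) ≃ₜ EuclideanSpace ℝ (Fin 2))
        (w : EuclideanSpace ℝ (Fin 2)) (k : ℝ),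
        (∀ a : EuclideanSpace ℝ (Fin 2), ‖a‖ ≤ r₁ → k < ⟪w, φ a⟫) ∧
        (∀ b : EuclideanSpace ℝ (Fin 2), r₂ ≤ ‖b‖ → ‖b‖ ≤ r₃ → ⟪w, φ b⟫ < k) := by
  rintro ⟨φ, w, k, hA, hB⟩
  have hr₂ : 0 ≤ r₂ := by linarith
  have h0 : k < ⟪w, φ 0⟫ := hA 0 (by simpa using h₁.le)
  have hw : w ≠ 0 := by
    rintro rfl
    obtain ⟨b, hb⟩ := exists_norm_eq (EuclideanSpace ℝ (Fin 2)) hr₂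
    have := hB b hb.ge (hb.trans_le h₃.le)
    simp only [inner_zero_left] at h0 this
    linarith
  have hU_conn : IsPreconnected (φ ⁻¹' {y | k < ⟪w, y⟫}) :=
    φ.isPreconnected_preimage.2 (convex_halfSpace_gt (innerₛₗ ℝ w).isLinear k).isPreconnected
  have hU_unb : ¬ IsBounded (φ ⁻¹' {y | k < ⟪w, y⟫}) :=
    fun h => not_isBounded_setOf_lt_inner hw k (φ.isBounded_of_isBounded_preimage h)
  obtain ⟨b, hbU, hb⟩ :=
    hU_conn.exists_norm_eq_of_not_isBounded hU_unb (x := 0) h0 (by simpa using hr₂)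
  exact (hB b hb.ge (hb.trans_le h₃.le)).not_gt hbU
end

section
/- Let Q1, Q2, Q3, Q4 be the open quadrants of the square (−1,1)² (excluding the axes), and define g = 1 on Q1 ∪ Q3 and g = −1 on Q2 ∪ Q4. Then there is no continuous function φ: R² → R agreeing in sign with g on the quadrants such that the sets φ^{-1}((0,∞)) ⊇ Q1 ∪ Q3 and φ^{-1}((−∞,0)) ⊇ Q2 ∪ Q4; equivalently, the opposite-quadrant classes cannot be linearly separated after applying any homeomorphism of R². -/
/-!
If a homeomorphism `φ` separated the quadrants by `f = w ⬝ φ`, continuity would force `f ≥ k` on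
the closure of `Q1 ∪ Q3` and `f ≤ k` on the closure of `Q2 ∪ Q4`, so `φ` would map the three
half-axes `{0} × [0,1]`, `[0,1] × {0}`, `[-1,0] × {0}` injectively into the line `w ⬝ y = k`.
These form a triod, which has no continuous injection into a line: two of its arms leave the image
of the centre on the same side, so by the intermediate value theorem their images overlap away
from it.
-/

open Set

section

variable {X : Type*} [TopologicalSpace X]

theorem IsPreconnected.exists_mem_mem_eq_of_lt {α : Type*} [LinearOrder α] [TopologicalSpace α]
    [OrderClosedTopology α] {F : X → α} {A B : Set X} {x₀ a b : X}
    (hA : IsPreconnected A) (hB : IsPreconnected B) (hFA : ContinuousOn F A)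
    (hFB : ContinuousOn F B) (h₀A : x₀ ∈ A) (h₀B : x₀ ∈ B) (ha : a ∈ A) (hb : b ∈ B)
    (hxa : F x₀ < F a) (hxb : F x₀ < F b) :
    ∃ x ∈ A, ∃ y ∈ B, F x = F y ∧ F x₀ < F x := by
  have hc : F x₀ < min (F a) (F b) := lt_min hxa hxb
  obtain ⟨x, hx, hFx⟩ := hA.intermediate_value h₀A ha hFA ⟨hc.le, min_le_left _ _⟩
  obtain ⟨y, hy, hFy⟩ := hB.intermediate_value h₀B hb hFB ⟨hc.le, min_le_right _ _⟩
  exact ⟨x, hx, y, hy, hFx.trans hFy.symm, hFx ▸ hc⟩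

/-- A triod does not embed in `ℝ`. -/
theorem not_injOn_of_triod {F : X → ℝ} {S : Set X} (hF : ContinuousOn F S) (hinj : InjOn F S)
    {x₀ : X} {A : Fin 3 → Set X} (hA : ∀ i, IsPreconnected (A i)) (h₀ : ∀ i, x₀ ∈ A i)
    (hnt : ∀ i, (A i).Nontrivial) (hS : ∀ i, A i ⊆ S)
    (hmeet : Pairwise fun i j => A i ∩ A j ⊆ {x₀}) : False := by
  choose a haA hax₀ using fun i => (hnt i).exists_ne x₀
  have hne : ∀ i, F (a i) ≠ F x₀ := fun i h => hax₀ i (hinj (hS i (haA i)) (hS i (h₀ i)) h)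
  obtain ⟨i, j, hij, hside⟩ :=
    Fintype.exists_ne_map_eq_of_card_lt (fun i => decide (F x₀ < F (a i))) (by simp)
  have two_arms_above : ∀ G : X → ℝ, ContinuousOn G S → InjOn G S →
      G x₀ < G (a i) → G x₀ < G (a j) → False := by
    intro G hG hGinj hi hj
    obtain ⟨x, hx, y, hy, hxy, hlt⟩ := (hA i).exists_mem_mem_eq_of_lt (hA j)
      (hG.mono (hS i)) (hG.mono (hS j)) (h₀ i) (h₀ j) (haA i) (haA j) hi hj
    have hx₀ : x = x₀ := hmeet hij ⟨hx, hGinj (hS i hx) (hS j hy) hxy ▸ hy⟩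
    exact hlt.ne' (congrArg G hx₀)
  by_cases hi : F x₀ < F (a i)
  · exact two_arms_above F hF hinj hi (by simpa [hi] using hside.symm)
  · have hj : ¬ F x₀ < F (a j) := by simpa [hi] using hside.symm
    exact two_arms_above (-F) hF.neg (neg_injective.comp_injOn hinj)
      (neg_lt_neg ((not_lt.1 hi).lt_of_ne (hne i))) (neg_lt_neg ((not_lt.1 hj).lt_of_ne (hne j)))

theorem closure_inter_closure_subset_setOf_eq {α : Type*} [LinearOrder α]
    [TopologicalSpace α] [OrderClosedTopology α] {f : X → α} (hf : Continuous f) {s t : Set X}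
    {k : α} (hs : ∀ x ∈ s, k < f x) (ht : ∀ x ∈ t, f x < k) :
    closure s ∩ closure t ⊆ {x | f x = k} := fun _ ⟨hxs, hxt⟩ =>
  le_antisymm (le_on_closure (fun y hy => (ht y hy).le) hf.continuousOn continuousOn_const hxt)
    (le_on_closure (fun y hy => (hs y hy).le) continuousOn_const hf.continuousOn hxs)

end

/-- `w.2 * y.1 - w.1 * y.2` is a coordinate along the line `w ⬝ y = k`. -/
theorem injOn_wedge_of_ne_zero {w : ℝ × ℝ} (hw : w ≠ 0) (k : ℝ) :
    InjOn (fun y : ℝ × ℝ => w.2 * y.1 - w.1 * y.2) {y | w.1 * y.1 + w.2 * y.2 = k} := by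
  intro x hx y hy hxy
  simp only [mem_ofPred_eq] at hx hy hxy
  have hn : w.1 ^ 2 + w.2 ^ 2 ≠ 0 := by
    have h : w.1 ≠ 0 ∨ w.2 ≠ 0 := by
      by_contra! h
      exact hw (Prod.ext h.1 h.2)
    rcases h with h | h <;> positivity
  exact Prod.ext (mul_left_cancel₀ hn (by linear_combination w.1 * (hx - hy) + w.2 * hxy))
    (mul_left_cancel₀ hn (by linear_combination w.2 * (hx - hy) - w.1 * hxy))

def axisArm : Fin 3 → Set (ℝ × ℝ) := ![{0} ×ˢ Icc 0 1, Icc 0 1 ×ˢ {0}, Icc (-1) 0 ×ˢ {0}]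

theorem isPreconnected_axisArm (i : Fin 3) : IsPreconnected (axisArm i) := by
  fin_cases i
  exacts [isPreconnected_singleton.prod isPreconnected_Icc,
    isPreconnected_Icc.prod isPreconnected_singleton,
    isPreconnected_Icc.prod isPreconnected_singleton]

theorem zero_mem_axisArm (i : Fin 3) : (0 : ℝ × ℝ) ∈ axisArm i := by
  fin_cases i <;> simp [axisArm]

theorem axisArm_nontrivial (i : Fin 3) : (axisArm i).Nontrivial := by
  refine ⟨0, zero_mem_axisArm i, ?_⟩
  fin_cases i
  exacts [⟨(0, 1), by simp [axisArm], by simp [Prod.ext_iff]⟩,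
    ⟨(1, 0), by simp [axisArm], by simp [Prod.ext_iff]⟩,
    ⟨(-1, 0), by simp [axisArm], by simp [Prod.ext_iff]⟩]

theorem axisArm_inter_subset : Pairwise fun i j => axisArm i ∩ axisArm j ⊆ {0} := by
  intro i j hij
  fin_cases i <;> fin_cases j <;> simp [axisArm, subset_def] at hij ⊢ <;>
    intros <;> constructor <;> linarith

theorem axisArm_subset_closure (i : Fin 3) : axisArm i ⊆
    closure (Ioo (-1) 0 ×ˢ Ioo 0 1 ∪ Ioo 0 1 ×ˢ Ioo (-1) 0) ∩
      closure (Ioo 0 1 ×ˢ Ioo 0 1 ∪ Ioo (-1) 0 ×ˢ Ioo (-1) 0) := by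
  simp only [closure_union, closure_prod_eq]
  rw [closure_Ioo zero_ne_one, closure_Ioo (neg_ne_zero.2 one_ne_zero)]
  fin_cases i <;> simp [axisArm, subset_def] <;> intros <;> norm_num [*]

/-- The opposite quadrants of the square `(-1,1)²` cannot be linearly separated after
applying any self-homeomorphism of the plane. -/
theorem quadrants_not_linearly_separable :
    ¬ ∃ (φ : (ℝ × ℝ) ≃ₜ (ℝ × ℝ)) (w : ℝ × ℝ) (k : ℝ),
        (∀ x ∈ (Set.Ioo (-1 : ℝ) 0 ×ˢ Set.Ioo (0 : ℝ) 1) ∪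
              (Set.Ioo (0 : ℝ) 1 ×ˢ Set.Ioo (-1 : ℝ) 0),
          w.1 * (φ x).1 + w.2 * (φ x).2 > k) ∧
        (∀ x ∈ (Set.Ioo (0 : ℝ) 1 ×ˢ Set.Ioo (0 : ℝ) 1) ∪
              (Set.Ioo (-1 : ℝ) 0 ×ˢ Set.Ioo (-1 : ℝ) 0),
          w.1 * (φ x).1 + w.2 * (φ x).2 < k) := by
  rintro ⟨φ, w, k, hpos, hneg⟩
  have hw : w ≠ 0 := by
    rintro rfl
    have h₁ := hpos (-1 / 2, 1 / 2) (by norm_num)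
    have h₂ := hneg (1 / 2, 1 / 2) (by norm_num)
    simp only [Prod.fst_zero, Prod.snd_zero, zero_mul, add_zero] at h₁ h₂
    exact h₁.not_gt h₂
  have hlevel := closure_inter_closure_subset_setOf_eq (by fun_prop) hpos hneg
  exact not_injOn_of_triod (F := fun x => w.2 * (φ x).1 - w.1 * (φ x).2) (by fun_prop)
    ((injOn_wedge_of_ne_zero hw k).comp φ.injective.injOn fun _ hx => hx)
    isPreconnected_axisArm zero_mem_axisArm axisArm_nontrivial
    (fun i => (axisArm_subset_closure i).trans hlevel) axisArm_inter_subset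
end

section
/- Let y^{[l+1]} = y^{[l]} + h Σ_i β_i f(u_i^{[l]}, y_i^{[l]}) be a RK discretization of ẏ = f(u, y), l = 0,…,L−1, and consider minimizing F(y^{[L]}). If β_i ≠ 0 for all i, then stationarity of the Lagrangian yields the adjoint iteration p^{[l+1]} = p^{[l]} + h Σ_i β̃_i g_i^{[l]}, g_i^{[l]} = −(∂_y f(u_i^{[l]}, y_i^{[l]}))^T p_i^{[l]}, p_i^{[l]} = p^{[l]} + h Σ_j ã_{ij} g_j^{[l]}, with terminal condition p^{[L]} = ∇F(y^{[L]}), where β̃_i = β_i and ã_{ij} = β_j − β_j a_{ji}/β_i, together with the stationarity conditions (∂_u f(u_i^{[l]}, y_i^{[l]}))^T p_i^{[l]} = 0. -/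
/-!
Dividing the `fᵢ`-stationarity condition by `h βᵢ` turns the multiplier `ξᵢ` into the stage
adjoint `pᵢ = p^[l+1] + βᵢ⁻¹ Σⱼ aⱼᵢ (∂_y fⱼ)ᵀ ξⱼ`. The `y`-stationarity condition
`p^[l] = p^[l+1] + Σⱼ (∂_y fⱼ)ᵀ ξⱼ` eliminates `p^[l+1]`, and writing `(∂_y fⱼ)ᵀ ξⱼ = -h βⱼ gⱼ`
gives the adjoint Runge–Kutta scheme, with `ãᵢⱼ / βⱼ = 1 - aⱼᵢ / βᵢ`.
-/

open Matrix

section AdjointAlgebra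

variable {𝕜 E ι : Type*} [Field 𝕜] [AddCommGroup E] [Module 𝕜 E] [Fintype ι]

theorem smul_sum_smul_neg_inv_mul_smul {h : 𝕜} (hh : h ≠ 0) (c b : ι → 𝕜) (w : ι → E) :
    h • ∑ i, c i • -((h * b i)⁻¹ • w i) = -∑ i, (c i / b i) • w i := by
  rw [Finset.smul_sum, ← Finset.sum_neg_distrib]
  refine Finset.sum_congr rfl fun i _ => ?_
  simp only [smul_neg, smul_smul]
  congr 2
  field_simp

theorem adjoint_step_of_stationary {h : 𝕜} (hh : h ≠ 0) {β : ι → 𝕜} (hβ : ∀ i, β i ≠ 0)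
    {p p' : E} {w : ι → E} (hp : p' = p - ∑ i, w i) :
    p' = p + h • ∑ i, β i • -((h * β i)⁻¹ • w i) := by
  rw [smul_sum_smul_neg_inv_mul_smul hh, hp, sub_eq_add_neg]
  simp only [div_self (hβ _), one_smul]

theorem adjoint_stage_of_stationary {h : 𝕜} (hh : h ≠ 0) {β : ι → 𝕜} (hβ : ∀ i, β i ≠ 0)
    (A : ι → ι → 𝕜) (i : ι) {p p' ξ : E} {w : ι → E} (hp : p' = p - ∑ j, w j)
    (hξ : ξ = h • (β i • p' + ∑ j, A j i • w j)) :
    (h * β i)⁻¹ • ξ = p + h • ∑ j, (β j - β j * A j i / β i) • -((h * β j)⁻¹ • w j) := by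
  have hcoeff : ∀ j, (β j - β j * A j i / β i) / β j = 1 - A j i / β i := fun j => by
    field_simp [hβ i, hβ j]
  calc (h * β i)⁻¹ • ξ = p' + ∑ j, (A j i / β i) • w j := by
        simp only [hξ, smul_add, Finset.smul_sum, smul_smul]
        congr 1
        · rw [inv_mul_cancel₀ (mul_ne_zero hh (hβ i)), one_smul]
        · refine Finset.sum_congr rfl fun j _ => ?_
          congr 1
          field_simp
    _ = p + -∑ j, (1 - A j i / β i) • w j := by
        simp only [hp, sub_smul, one_smul, Finset.sum_sub_distrib]
        abel
    _ = _ := by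
        rw [smul_sum_smul_neg_inv_mul_smul hh]
        simp only [hcoeff]

end AdjointAlgebra

theorem rk_adjoint_from_lagrangian_general
    {L s d m : ℕ} (h : ℝ) (hh : h ≠ 0)
    (A : Fin s → Fin s → ℝ) (β : Fin s → ℝ) (hβ : ∀ i, β i ≠ 0)
    -- the Jacobians of `f` with respect to the state and the control
    (Dy : (Fin m → ℝ) → (Fin d → ℝ) → Matrix (Fin d) (Fin d) ℝ)
    (Du : (Fin m → ℝ) → (Fin d → ℝ) → Matrix (Fin d) (Fin m) ℝ)
    (ystage : Fin L → Fin s → Fin d → ℝ)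
    (u : Fin L → Fin s → Fin m → ℝ)
    (p : Fin (L + 1) → Fin d → ℝ) (ξ : Fin L → Fin s → Fin d → ℝ)
    -- stationarity of the Lagrangian in `y`
    (hstatY : ∀ l : Fin L, p l.succ =
      p l.castSucc - ∑ i, (Dy (u l i) (ystage l i))ᵀ.mulVec (ξ l i))
    -- stationarity of the Lagrangian in `f_i`
    (hstatF : ∀ l i, ξ l i =
      h • (β i • p l.succ + ∑ j, A j i • (Dy (u l j) (ystage l j))ᵀ.mulVec (ξ l j)))
    -- stationarity of the Lagrangian in `u_i`
    (hstatU : ∀ l i, (Du (u l i) (ystage l i))ᵀ.mulVec (ξ l i) = 0) :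
    -- with `padj l i = ξ l i / (h β i)` and `g l i = -(∂_y f)ᵀ padj l i`:
    (∀ l : Fin L, ∀ i, (h * β i) • ((h * β i)⁻¹ • ξ l i) = ξ l i) ∧
    (∀ l : Fin L, p l.succ = p l.castSucc +
      h • ∑ i, β i • (-(Dy (u l i) (ystage l i))ᵀ.mulVec ((h * β i)⁻¹ • ξ l i))) ∧
    (∀ l : Fin L, ∀ i, (h * β i)⁻¹ • ξ l i = p l.castSucc +
      h • ∑ j, (β j - β j * A j i / β i) •
        (-(Dy (u l j) (ystage l j))ᵀ.mulVec ((h * β j)⁻¹ • ξ l j))) ∧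
    (∀ l : Fin L, ∀ i, (Du (u l i) (ystage l i))ᵀ.mulVec ((h * β i)⁻¹ • ξ l i) = 0) := by
  simp only [Matrix.mulVec_smul]
  refine ⟨fun l i => smul_inv_smul₀ (mul_ne_zero hh (hβ i)) _,
    fun l => adjoint_step_of_stationary hh hβ (hstatY l),
    fun l i => adjoint_stage_of_stationary hh hβ A i (hstatY l) (hstatF l i),
    fun l i => by rw [hstatU l i, smul_zero]⟩

/-- First-discretize-then-optimize for Runge–Kutta networks: if the Runge–Kutta state
equations hold and the stationarity conditions of the Lagrangian (with multipliers
`p`, `ξ`) are satisfied, then with `padj l i := ξ l i / (h βᵢ)` one obtains the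
adjoint Runge–Kutta iteration with coefficients `β̃ᵢ = βᵢ`,
`ãᵢⱼ = βⱼ − βⱼ aⱼᵢ/βᵢ`, terminal condition `p^[L] = ∇F(y^[L])`, and the first-order
optimality conditions `(∂ᵤf)ᵀ pᵢ = 0`. -/
theorem rk_adjoint_from_lagrangian
    {L s d m : ℕ} (h : ℝ) (hh : h ≠ 0)
    (A : Fin s → Fin s → ℝ) (β : Fin s → ℝ) (hβ : ∀ i, β i ≠ 0)
    (f : (Fin m → ℝ) → (Fin d → ℝ) → (Fin d → ℝ))
    -- the Jacobians of `f` with respect to the state and the control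
    (Dy : (Fin m → ℝ) → (Fin d → ℝ) → Matrix (Fin d) (Fin d) ℝ)
    (Du : (Fin m → ℝ) → (Fin d → ℝ) → Matrix (Fin d) (Fin m) ℝ)
    (hDy : ∀ u y₀, HasFDerivAt (fun y => f u y)
      ((Dy u y₀).mulVecLin.toContinuousLinearMap) y₀)
    (hDu : ∀ u₀ y, HasFDerivAt (fun u => f u y)
      ((Du u₀ y).mulVecLin.toContinuousLinearMap) u₀)
    -- cost and its gradient
    (F : (Fin d → ℝ) → ℝ) (gradF : (Fin d → ℝ) → (Fin d → ℝ))
    (hF : ∀ x, HasFDerivAt F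
      (∑ k, gradF x k • (ContinuousLinearMap.proj k : (Fin d → ℝ) →L[ℝ] ℝ)) x)
    (y : Fin (L + 1) → Fin d → ℝ) (ystage : Fin L → Fin s → Fin d → ℝ)
    (u : Fin L → Fin s → Fin m → ℝ)
    (p : Fin (L + 1) → Fin d → ℝ) (ξ : Fin L → Fin s → Fin d → ℝ)
    -- Runge–Kutta state equations
    (hstage : ∀ l i, ystage l i =
      y l.castSucc + h • ∑ j, A i j • f (u l j) (ystage l j))
    (hstate : ∀ l, y l.succ =
      y l.castSucc + h • ∑ i, β i • f (u l i) (ystage l i))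
    -- stationarity of the Lagrangian in `y`
    (hstatY : ∀ l : Fin L, p l.succ =
      p l.castSucc - ∑ i, (Dy (u l i) (ystage l i))ᵀ.mulVec (ξ l i))
    (hterm : p (Fin.last L) = gradF (y (Fin.last L)))
    -- stationarity of the Lagrangian in `f_i`
    (hstatF : ∀ l i, ξ l i =
      h • (β i • p l.succ + ∑ j, A j i • (Dy (u l j) (ystage l j))ᵀ.mulVec (ξ l j)))
    -- stationarity of the Lagrangian in `u_i`
    (hstatU : ∀ l i, (Du (u l i) (ystage l i))ᵀ.mulVec (ξ l i) = 0) :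
    -- with `padj l i = ξ l i / (h β i)` and `g l i = -(∂_y f)ᵀ padj l i`:
    (∀ l : Fin L, ∀ i, (h * β i) • ((h * β i)⁻¹ • ξ l i) = ξ l i) ∧
    (∀ l : Fin L, p l.succ = p l.castSucc +
      h • ∑ i, β i • (-(Dy (u l i) (ystage l i))ᵀ.mulVec ((h * β i)⁻¹ • ξ l i))) ∧
    (∀ l : Fin L, ∀ i, (h * β i)⁻¹ • ξ l i = p l.castSucc +
      h • ∑ j, (β j - β j * A j i / β i) •
        (-(Dy (u l j) (ystage l j))ᵀ.mulVec ((h * β j)⁻¹ • ξ l j))) ∧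
    (∀ l : Fin L, ∀ i, (Du (u l i) (ystage l i))ᵀ.mulVec ((h * β i)⁻¹ • ξ l i) = 0) :=
  rk_adjoint_from_lagrangian_general h hh A β hβ Dy Du ystage u p ξ hstatY hstatF hstatU
end
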